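/- Upper bound on large local densities (strictly stable case): for 0 < β ≤ α < 1 and any x ≥ 0, limsup_{n→∞} (1/n) log Z_n([x√n, ∞)) ≤ log 2 - x²(1-α²)/2 almost surely. -/

import Mathlib

/-!
Let `N` be the BAR process driven by the same noise `η` but started from `0` at the root. Both
processes obey the same affine recursion with coefficients of modulus at most `1`, so
`|X i - N i| ≤ |X 1|`: the initial value only shifts the threshold `x √n` by a bounded amount.
By induction down the tree, using that the noise of the children of a vertex is independent of
everything above it, every `N i` is sub-Gaussian with variance proxy `1 / (1 - α²)`, and the
Chernoff bound gives `E Z_n([x √n - M, ∞)) ≤ 2ⁿ exp (-x² (1 - α²) n / 2 + O(√n))`. Markov's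
inequality and Borel–Cantelli then bound `Z_n` by `exp (n (log 2 - x² (1 - α²) / 2 + ε))`
eventually, almost surely, simultaneously for all `ε = 1 / (j + 1)` and all integers `M ≥ |X 1|`.
-/

open MeasureTheory ProbabilityTheory Filter
open scoped ENNReal

/-- The centered bivariate Gaussian measure on `ℝ × ℝ` with unit marginal variances and
correlation `ρ`. -/
noncomputable def gaussian2 (ρ : ℝ) : Measure (ℝ × ℝ) :=
  Measure.map (fun p : ℝ × ℝ => (p.1, ρ * p.1 + Real.sqrt (1 - ρ ^ 2) * p.2))
    ((gaussianReal 0 1).prod (gaussianReal 0 1))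

/-- The number of individuals of generation `n` of the BAR process whose value is `≥ a`. -/
noncomputable def Zcount {Ω : Type*} (X : ℕ → Ω → ℝ) (n : ℕ) (a : ℝ) (ω : Ω) : ℕ :=
  ((Finset.Ico (2 ^ n) (2 ^ (n + 1))).filter (fun i => a ≤ X i ω)).card

open Real
open scoped NNReal

lemma gaussian2_map_fst (ρ : ℝ) : (gaussian2 ρ).map Prod.fst = gaussianReal 0 1 := by
  rw [gaussian2, Measure.map_map measurable_fst (by fun_prop)]
  exact Measure.map_fst_prod.trans (by simp)

lemma gaussian2_map_snd {ρ : ℝ} (hρ : ρ ^ 2 ≤ 1) :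
    (gaussian2 ρ).map Prod.snd = gaussianReal 0 1 := by
  have hvar : ρ ^ 2 + √(1 - ρ ^ 2) ^ 2 = 1 := by rw [sq_sqrt (by linarith)]; ring
  rw [gaussian2, Measure.map_map measurable_snd (by fun_prop)]
  calc ((gaussianReal 0 1).prod (gaussianReal 0 1)).map (fun p => ρ * p.1 + √(1 - ρ ^ 2) * p.2)
      = (gaussianReal 0 1).map (ρ * ·) ∗ (gaussianReal 0 1).map (√(1 - ρ ^ 2) * ·) := by
        rw [Measure.conv, Measure.map_prod_map _ _ (by fun_prop) (by fun_prop),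
          Measure.map_map (by fun_prop) (by fun_prop)]
        rfl
    _ = gaussianReal 0 1 := by
        rw [gaussianReal_map_const_mul, gaussianReal_map_const_mul, gaussianReal_conv_gaussianReal]
        congr 1
        · simp
        · ext; simp [hvar]

lemma hasSubgaussianMGF_of_map_eq_gaussianReal {Ω : Type*} [MeasurableSpace Ω] {μ : Measure Ω}
    {X : Ω → ℝ} (hX : Measurable X) {v : ℝ≥0} (hlaw : μ.map X = gaussianReal 0 v) :
    HasSubgaussianMGF X v μ := by
  rw [← HasSubgaussianMGF.id_map_iff hX.aemeasurable, hlaw]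
  refine ⟨fun t => integrable_exp_mul_gaussianReal t, fun t => ?_⟩
  rw [mgf_id_gaussianReal]
  simp

lemma mul_sqrt_le_mul_div_two_add (K : ℝ) {ε y : ℝ} (hε : 0 < ε) (hy : 0 ≤ y) :
    K * √y ≤ ε * y / 2 + K ^ 2 / (2 * ε) := by
  have hsq : (ε * √y) ^ 2 = ε ^ 2 * y := by rw [mul_pow, sq_sqrt hy]
  rw [div_add_div _ _ two_ne_zero (by positivity), le_div_iff₀ (by positivity)]
  nlinarith [sq_nonneg (K - ε * √y)]

namespace ProbabilityTheory.HasSubgaussianMGF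

variable {Ω : Type*} [MeasurableSpace Ω] {μ : Measure Ω} {X : Ω → ℝ} {c : ℝ≥0}

lemma mono (h : HasSubgaussianMGF X c μ) {d : ℝ≥0} (hcd : c ≤ d) : HasSubgaussianMGF X d μ :=
  ⟨h.integrable_exp_mul, fun t => (h.mgf_le t).trans (exp_le_exp.2 (by gcongr))⟩

lemma measureReal_ge_le_exp_add [IsFiniteMeasure μ] (h : HasSubgaussianMGF X c μ) (b : ℝ)
    {t : ℝ} (ht : 0 ≤ t) : μ.real {ω | b ≤ X ω} ≤ exp (-t * b + c * t ^ 2 / 2) := by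
  rw [exp_add]
  exact (measure_ge_le_exp_mul_mgf b ht (h.integrable_exp_mul t)).trans
    (mul_le_mul_of_nonneg_left (h.mgf_le t) (exp_nonneg _))

end ProbabilityTheory.HasSubgaussianMGF

section Zcount

variable {Ω : Type*}

lemma Zcount_eq_sum_indicator (X : ℕ → Ω → ℝ) (n : ℕ) (a : ℝ) (ω : Ω) :
    (Zcount X n a ω : ℝ)
      = ∑ i ∈ Finset.Ico (2 ^ n) (2 ^ (n + 1)), {ω | a ≤ X i ω}.indicator 1 ω := by
  simp only [Zcount, Finset.card_filter, Nat.cast_sum, Nat.cast_ite, Nat.cast_one, Nat.cast_zero,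
    Set.indicator_apply, Set.mem_ofPred_eq, Pi.one_apply]

lemma Zcount_mono {X Y : ℕ → Ω → ℝ} {n : ℕ} {a b : ℝ} {ω : Ω}
    (h : ∀ i ∈ Finset.Ico (2 ^ n) (2 ^ (n + 1)), a ≤ X i ω → b ≤ Y i ω) :
    Zcount X n a ω ≤ Zcount Y n b ω :=
  Finset.card_le_card (Finset.monotone_filter_right _ h)

variable [MeasurableSpace Ω] {μ : Measure Ω}

lemma ae_eventually_notMem_of_summable_measureReal [IsFiniteMeasure μ] {s : ℕ → Set Ω}
    (hs : Summable fun n => μ.real (s n)) : ∀ᵐ ω ∂μ, ∀ᶠ n in atTop, ω ∉ s n := by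
  refine ae_eventually_notMem ?_
  rw [tsum_congr fun n => (ofReal_measureReal (μ := μ) (s := s n)).symm,
    ← ENNReal.ofReal_tsum_of_nonneg (fun n => measureReal_nonneg) hs]
  exact ENNReal.ofReal_ne_top

lemma integral_Zcount [IsFiniteMeasure μ] {X : ℕ → Ω → ℝ} (hX : ∀ i, Measurable (X i))
    (n : ℕ) (a : ℝ) :
    ∫ ω, (Zcount X n a ω : ℝ) ∂μ
      = ∑ i ∈ Finset.Ico (2 ^ n) (2 ^ (n + 1)), μ.real {ω | a ≤ X i ω} := by
  simp_rw [Zcount_eq_sum_indicator]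
  rw [integral_finsetSum]
  · exact Finset.sum_congr rfl fun i _ =>
      integral_indicator_one (measurableSet_le measurable_const (hX i))
  · exact fun i _ => (integrable_const 1).indicator (measurableSet_le measurable_const (hX i))

lemma mul_measureReal_le_Zcount_le [IsFiniteMeasure μ] {X : ℕ → Ω → ℝ}
    (hX : ∀ i, Measurable (X i)) {n : ℕ} {a p : ℝ}
    (hp : ∀ i ∈ Finset.Ico (2 ^ n) (2 ^ (n + 1)), μ.real {ω | a ≤ X i ω} ≤ p) (c : ℝ) :
    c * μ.real {ω | c ≤ Zcount X n a ω} ≤ 2 ^ n * p := by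
  have hint : Integrable (fun ω => (Zcount X n a ω : ℝ)) μ := by
    simp_rw [Zcount_eq_sum_indicator]
    exact integrable_finsetSum _ fun i _ =>
      (integrable_const 1).indicator (measurableSet_le measurable_const (hX i))
  calc c * μ.real {ω | c ≤ Zcount X n a ω}
      ≤ ∫ ω, (Zcount X n a ω : ℝ) ∂μ :=
        mul_meas_ge_le_integral_of_nonneg (ae_of_all _ fun ω => Nat.cast_nonneg _) hint c
    _ ≤ 2 ^ n * p := by
        rw [integral_Zcount hX]
        refine (Finset.sum_le_card_nsmul _ _ _ hp).trans_eq ?_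
        rw [Nat.card_Ico, nsmul_eq_mul, pow_succ]
        push_cast [show 2 ^ n * 2 - 2 ^ n = 2 ^ n by omega]
        ring

theorem ae_eventually_Zcount_lt_of_hasSubgaussianMGF [IsFiniteMeasure μ] {Y : ℕ → Ω → ℝ}
    (hYmeas : ∀ i, Measurable (Y i)) {c : ℝ≥0} (hc : 0 < c)
    (hY : ∀ i, HasSubgaussianMGF (Y i) c μ) {x : ℝ} (hx : 0 ≤ x) (M : ℝ) {ε : ℝ} (hε : 0 < ε) :
    ∀ᵐ ω ∂μ, ∀ᶠ n : ℕ in atTop,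
      (Zcount Y n (x * √n - M) ω : ℝ) < exp (n * (log 2 - x ^ 2 / (2 * c) + ε)) := by
  set L := log 2 - x ^ 2 / (2 * c)
  set K := x * M / c
  have hbound : ∀ n : ℕ, μ.real {ω | exp (n * (L + ε)) ≤ Zcount Y n (x * √n - M) ω}
      ≤ exp (K ^ 2 / (2 * ε)) * exp (-ε / 2) ^ n := by
    intro n
    -- the Chernoff parameter that is optimal for the threshold `x √n`
    set t := x * √n / c
    have hsq : √(n : ℝ) ^ 2 = n := sq_sqrt n.cast_nonneg
    have hmarkov := mul_measureReal_le_Zcount_le (μ := μ) (n := n) hYmeas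
      (fun i _ => (hY i).measureReal_ge_le_exp_add (x * √n - M) (t := t) (by positivity))
      (exp (n * (L + ε)))
    have hexponent : n * log 2 + (-t * (x * √n - M) + c * t ^ 2 / 2) - n * (L + ε)
        = K * √n - ε * n := by
      simp only [t, K, L]
      field_simp
      linear_combination (-x ^ 2) * hsq
    calc _ ≤ 2 ^ n * exp (-t * (x * √n - M) + c * t ^ 2 / 2) / exp (n * (L + ε)) :=
          (le_div_iff₀' (exp_pos _)).2 hmarkov
      _ = exp (K * √n - ε * n) := by
          rw [← hexponent, exp_sub, exp_add (n * log 2), exp_nat_mul (log 2), exp_log two_pos]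
      _ ≤ exp (K ^ 2 / (2 * ε) + n * (-ε / 2)) := by
          gcongr
          linarith [mul_sqrt_le_mul_div_two_add K hε n.cast_nonneg]
      _ = exp (K ^ 2 / (2 * ε)) * exp (-ε / 2) ^ n := by rw [exp_add, exp_nat_mul]
  have hsum : Summable fun n : ℕ => exp (K ^ 2 / (2 * ε)) * exp (-ε / 2) ^ n :=
    (summable_geometric_of_lt_one (exp_nonneg _) (exp_lt_one_iff.2 (by linarith))).mul_left _
  filter_upwards [ae_eventually_notMem_of_summable_measureReal
    (hsum.of_nonneg_of_le (fun n => measureReal_nonneg) hbound)] with ω hω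
  filter_upwards [hω] with n hn
  simpa using hn

end Zcount

lemma limsup_log_div_le_of_eventually_lt {z : ℕ → ℕ} {L : ℝ}
    (h : ∀ j : ℕ, ∀ᶠ n : ℕ in atTop, (z n : ℝ) < exp (n * (L + 1 / ((j : ℝ) + 1)))) :
    limsup (fun n : ℕ => if z n = 0 then (⊥ : EReal) else ((log (z n) / n : ℝ) : EReal)) atTop
      ≤ (L : EReal) := by
  refine EReal.le_of_forall_lt_iff_le.1 fun r hr => ?_
  obtain ⟨j, hj⟩ := exists_nat_one_div_lt (sub_pos.2 (EReal.coe_lt_coe_iff.1 hr))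
  refine limsup_le_of_le (by isBoundedDefault) ?_
  filter_upwards [h j, eventually_gt_atTop 0] with n hn hn0
  split_ifs with hz
  · exact bot_le
  · have hzpos : (0 : ℝ) < z n := by exact_mod_cast Nat.pos_of_ne_zero hz
    rw [EReal.coe_le_coe_iff, div_le_iff₀ (by exact_mod_cast hn0)]
    calc log (z n) ≤ n * (L + 1 / ((j : ℝ) + 1)) := ((log_lt_iff_lt_exp hzpos).2 hn).le
      _ ≤ r * n := by nlinarith [(n.cast_nonneg : (0 : ℝ) ≤ n)]

section BinaryTree

variable {Ω : Type*}

def childNoise (η : ℕ → Ω → ℝ) (k : ℕ) (ω : Ω) : ℝ × ℝ :=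
  (η (2 * (k + 1)) ω, η (2 * (k + 1) + 1) ω)

/-- The noise of the children of the vertices `1, …, m - 1`, that is `σ(η 2, …, η (2 m - 1))`. -/
abbrev noiseBelow (η : ℕ → Ω → ℝ) (m : ℕ) : MeasurableSpace Ω :=
  ⨆ k ∈ {k : ℕ | k + 1 < m}, MeasurableSpace.comap (childNoise η k) inferInstance

def barCoeff (α β : ℝ) (i : ℕ) : ℝ := if Even i then α else β

noncomputable def barNoise (α β : ℝ) (η : ℕ → Ω → ℝ) (i : ℕ) (ω : Ω) : ℝ :=
  if i ≤ 1 then 0 else barCoeff α β i * barNoise α β η (i / 2) ω + η i ω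
termination_by i
decreasing_by omega

variable {α β : ℝ} {η : ℕ → Ω → ℝ}

lemma barNoise_of_le_one {i : ℕ} (hi : i ≤ 1) : barNoise α β η i = fun _ => 0 := by
  ext ω
  rw [barNoise, if_pos hi]

lemma barNoise_of_two_le {i : ℕ} (hi : 2 ≤ i) :
    barNoise α β η i = fun ω => barCoeff α β i * barNoise α β η (i / 2) ω + η i ω := by
  ext ω
  rw [barNoise, if_neg (by omega)]

lemma barCoeff_sq_le (hβα : β ^ 2 ≤ α ^ 2) (i : ℕ) : barCoeff α β i ^ 2 ≤ α ^ 2 := by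
  unfold barCoeff
  split_ifs
  exacts [le_rfl, hβα]

lemma abs_barCoeff_le_one (hα : |α| ≤ 1) (hβ : |β| ≤ 1) (i : ℕ) : |barCoeff α β i| ≤ 1 := by
  unfold barCoeff
  split_ifs <;> assumption

lemma eq_barCoeff_mul_add {X : ℕ → Ω → ℝ}
    (hXrec : ∀ k, 1 ≤ k → ∀ ω,
      X (2 * k) ω = α * X k ω + η (2 * k) ω ∧ X (2 * k + 1) ω = β * X k ω + η (2 * k + 1) ω)
    {i : ℕ} (hi : 2 ≤ i) (ω : Ω) : X i ω = barCoeff α β i * X (i / 2) ω + η i ω := by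
  obtain ⟨k, rfl | rfl⟩ := Nat.even_or_odd' i
  · simpa [barCoeff, show 2 * k / 2 = k by omega] using (hXrec k (by omega) ω).1
  · simpa [barCoeff, show (2 * k + 1) / 2 = k by omega, Nat.not_even_bit1] using
      (hXrec k (by omega) ω).2

lemma abs_sub_barNoise_le {X : ℕ → Ω → ℝ} (hα : |α| ≤ 1) (hβ : |β| ≤ 1)
    (hXrec : ∀ k, 1 ≤ k → ∀ ω,
      X (2 * k) ω = α * X k ω + η (2 * k) ω ∧ X (2 * k + 1) ω = β * X k ω + η (2 * k + 1) ω)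
    (ω : Ω) {i : ℕ} (hi : 1 ≤ i) : |X i ω - barNoise α β η i ω| ≤ |X 1 ω| := by
  induction i using Nat.strong_induction_on with
  | _ i ih =>
    rcases hi.eq_or_lt with rfl | hi
    · simp [barNoise_of_le_one le_rfl]
    · have hsub : X i ω - barNoise α β η i ω
          = barCoeff α β i * (X (i / 2) ω - barNoise α β η (i / 2) ω) := by
        rw [eq_barCoeff_mul_add hXrec hi ω, barNoise_of_two_le hi]
        ring
      rw [hsub, abs_mul]
      exact (mul_le_of_le_one_left (abs_nonneg _) (abs_barCoeff_le_one hα hβ i)).trans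
        (ih _ (by omega) (by omega))

lemma childNoise_of_two_le {i : ℕ} (hi : 2 ≤ i) :
    η i = Prod.fst ∘ childNoise η (i / 2 - 1) ∨ η i = Prod.snd ∘ childNoise η (i / 2 - 1) := by
  obtain ⟨k, rfl | rfl⟩ := Nat.even_or_odd' i <;>
    obtain ⟨j, rfl⟩ : ∃ j, k = j + 1 := ⟨k - 1, by omega⟩
  · exact .inl (by ext ω; simp [childNoise])
  · exact .inr (by ext ω; simp [childNoise, show (2 * (j + 1) + 1) / 2 = j + 1 by omega])

lemma measurable_noise_noiseBelow {i : ℕ} (hi : 2 ≤ i) : Measurable[noiseBelow η i] (η i) := by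
  have hle : MeasurableSpace.comap (childNoise η (i / 2 - 1)) inferInstance ≤ noiseBelow η i :=
    le_biSup (fun k => MeasurableSpace.comap (childNoise η k) inferInstance)
      (show i / 2 - 1 + 1 < i by omega)
  rcases childNoise_of_two_le (η := η) hi with h | h <;> rw [h]
  · exact (measurable_fst.comp (comap_measurable _)).mono hle le_rfl
  · exact (measurable_snd.comp (comap_measurable _)).mono hle le_rfl

lemma noiseBelow_mono : Monotone (noiseBelow η) := fun _ _ hmn =>
  biSup_mono fun _ hk => lt_of_lt_of_le hk hmn

lemma measurable_barNoise_noiseBelow (i : ℕ) : Measurable[noiseBelow η i] (barNoise α β η i) := by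
  induction i using Nat.strong_induction_on with
  | _ i ih =>
    rcases le_or_gt i 1 with hi | hi
    · rw [barNoise_of_le_one hi]
      exact measurable_const
    · rw [barNoise_of_two_le hi]
      exact (measurable_const.mul ((ih _ (by omega)).mono (noiseBelow_mono (by omega)) le_rfl)).add
        (measurable_noise_noiseBelow hi)

end BinaryTree

section BarNoise

variable {Ω : Type*} [MeasurableSpace Ω] {μ : Measure Ω} {α β : ℝ} {η : ℕ → Ω → ℝ}

lemma measurable_childNoise (hη : ∀ i, Measurable (η i)) (k : ℕ) : Measurable (childNoise η k) :=
  (hη _).prodMk (hη _)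

lemma noiseBelow_le (hη : ∀ i, Measurable (η i)) (m : ℕ) :
    noiseBelow η m ≤ ‹MeasurableSpace Ω› :=
  iSup₂_le fun k _ => (measurable_childNoise hη k).comap_le

lemma measurable_barNoise (hη : ∀ i, Measurable (η i)) (i : ℕ) : Measurable (barNoise α β η i) :=
  (measurable_barNoise_noiseBelow i).mono (noiseBelow_le hη i) le_rfl

lemma indepFun_barNoise_div_two [IsProbabilityMeasure μ] (hη : ∀ i, Measurable (η i))
    (hiid : iIndepFun (childNoise η) μ) {i : ℕ} (hi : 2 ≤ i) :
    IndepFun (barNoise α β η (i / 2)) (η i) μ := by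
  obtain ⟨k, hk⟩ : ∃ k, i / 2 = k + 1 := ⟨i / 2 - 1, by omega⟩
  have hindep : Indep (MeasurableSpace.comap (childNoise η k) inferInstance)
      (noiseBelow η (k + 1)) μ := by
    simpa [noiseBelow] using indep_iSup_of_disjoint (fun j => (measurable_childNoise hη j).comap_le)
      hiid.iIndep (show Disjoint ({k} : Set ℕ) {j | j + 1 < k + 1} by simp)
  have hnoise : Measurable[MeasurableSpace.comap (childNoise η k) inferInstance] (η i) := by
    rcases childNoise_of_two_le (η := η) hi with h | h <;> rw [h, show i / 2 - 1 = k by omega]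
    exacts [measurable_fst.comp (comap_measurable _), measurable_snd.comp (comap_measurable _)]
  rw [IndepFun_iff_Indep]
  refine indep_of_indep_of_le_left (indep_of_indep_of_le_right hindep.symm hnoise.comap_le) ?_
  rw [hk]
  exact (measurable_barNoise_noiseBelow (k + 1)).comap_le

lemma hasSubgaussianMGF_noise (hη : ∀ i, Measurable (η i)) {ρ : ℝ} (hρ : ρ ^ 2 ≤ 1)
    (hlaw : ∀ k, μ.map (childNoise η k) = gaussian2 ρ) {i : ℕ} (hi : 2 ≤ i) :
    HasSubgaussianMGF (η i) 1 μ := by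
  refine hasSubgaussianMGF_of_map_eq_gaussianReal (hη i) ?_
  rcases childNoise_of_two_le (η := η) hi with h | h <;>
    rw [h, ← Measure.map_map (by fun_prop) (measurable_childNoise hη _), hlaw]
  exacts [gaussian2_map_fst ρ, gaussian2_map_snd hρ]

lemma hasSubgaussianMGF_barNoise [IsProbabilityMeasure μ] (hα : α ^ 2 < 1)
    (hβα : β ^ 2 ≤ α ^ 2) (hηmeas : ∀ i, Measurable (η i)) (hiid : iIndepFun (childNoise η) μ)
    (hη : ∀ i, 2 ≤ i → HasSubgaussianMGF (η i) 1 μ) (i : ℕ) :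
    HasSubgaussianMGF (barNoise α β η i) (1 - α ^ 2)⁻¹.toNNReal μ := by
  induction i using Nat.strong_induction_on with
  | _ i ih =>
    rcases le_or_gt i 1 with hi | hi
    · rw [barNoise_of_le_one hi]
      exact HasSubgaussianMGF.fun_zero.mono (by positivity)
    · rw [barNoise_of_two_le hi]
      refine (((ih _ (by omega)).const_mul _).add_of_indepFun (hη i hi) ?_).mono ?_
      · exact (indepFun_barNoise_div_two hηmeas hiid hi).comp (measurable_const_mul _) measurable_id
      -- `1 / (1 - α²)` is the fixed point of the variance recursion `v ↦ α² v + 1`.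
      · have h1α : 0 < 1 - α ^ 2 := by linarith
        rw [← NNReal.coe_le_coe]
        change barCoeff α β i ^ 2 * ((1 - α ^ 2)⁻¹.toNNReal : ℝ) + 1 ≤ (1 - α ^ 2)⁻¹.toNNReal
        rw [Real.coe_toNNReal _ (inv_nonneg.2 h1α.le)]
        calc barCoeff α β i ^ 2 * (1 - α ^ 2)⁻¹ + 1 ≤ α ^ 2 * (1 - α ^ 2)⁻¹ + 1 := by
              gcongr ?_ * _ + _
              exact barCoeff_sq_le hβα i
          _ = (1 - α ^ 2)⁻¹ := by field_simp; ring

end BarNoise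

theorem stmt_16_general
    {Ω : Type*} [MeasureSpace Ω] [IsProbabilityMeasure (ℙ : Measure Ω)]
    (α β ρ : ℝ) (hρ : ρ ∈ Set.Ioo (-1 : ℝ) 1)
    (hβ : 0 < β) (hβα : β ≤ α) (hα : α < 1)
    (X η : ℕ → Ω → ℝ)
    (hηmeas : ∀ i, Measurable (η i))
    (hXrec : ∀ k, 1 ≤ k → ∀ ω,
      X (2 * k) ω = α * X k ω + η (2 * k) ω ∧
      X (2 * k + 1) ω = β * X k ω + η (2 * k + 1) ω)
    (hηiid : iIndepFun
      (fun k ω => (η (2 * (k + 1)) ω, η (2 * (k + 1) + 1) ω)) ℙ)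
    (hηlaw : ∀ k, Measure.map (fun ω => (η (2 * (k + 1)) ω, η (2 * (k + 1) + 1) ω)) ℙ
      = gaussian2 ρ)
    (x : ℝ) (hx : 0 ≤ x) :
    ∀ᵐ ω ∂ℙ, Filter.limsup
        (fun n : ℕ => if Zcount X n (x * Real.sqrt n) ω = 0 then (⊥ : EReal)
          else ((Real.log (Zcount X n (x * Real.sqrt n) ω) / n : ℝ) : EReal))
        atTop
      ≤ ((Real.log 2 - x ^ 2 * (1 - α ^ 2) / 2 : ℝ) : EReal) := by
  have h1α : 0 < 1 - α ^ 2 := by nlinarith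
  have hN : ∀ i, HasSubgaussianMGF (barNoise α β η i) (1 - α ^ 2)⁻¹.toNNReal ℙ :=
    hasSubgaussianMGF_barNoise (by linarith) (by nlinarith) hηmeas hηiid
      fun i hi => hasSubgaussianMGF_noise hηmeas (by nlinarith [hρ.1, hρ.2]) hηlaw hi
  have hvar : x ^ 2 / (2 * ((1 - α ^ 2)⁻¹.toNNReal : ℝ)) = x ^ 2 * (1 - α ^ 2) / 2 := by
    rw [Real.coe_toNNReal _ (inv_nonneg.2 h1α.le)]
    field_simp
  have hcount : ∀ᵐ ω ∂ℙ, ∀ M j : ℕ, ∀ᶠ n : ℕ in atTop,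
      (Zcount (barNoise α β η) n (x * √n - M) ω : ℝ)
        < exp (n * (log 2 - x ^ 2 * (1 - α ^ 2) / 2 + 1 / ((j : ℝ) + 1))) := by
    refine ae_all_iff.2 fun M => ae_all_iff.2 fun j => ?_
    rw [← hvar]
    exact ae_eventually_Zcount_lt_of_hasSubgaussianMGF (measurable_barNoise hηmeas)
      (Real.toNNReal_pos.2 (inv_pos.2 h1α)) hN hx M (by positivity)
  filter_upwards [hcount] with ω hω
  refine limsup_log_div_le_of_eventually_lt fun j => ?_
  filter_upwards [hω ⌈|X 1 ω|⌉₊ j] with n hn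
  refine lt_of_le_of_lt (Nat.cast_le.2 (Zcount_mono fun i hi hXi => ?_)) hn
  have hdev := abs_sub_barNoise_le (abs_le.2 ⟨by linarith, hα.le⟩)
    (abs_le.2 ⟨by linarith, by linarith⟩) hXrec ω (Nat.one_le_two_pow.trans (Finset.mem_Ico.1 hi).1)
  linarith [Nat.le_ceil |X 1 ω|, (abs_le.1 hdev).2]

/-- Upper bound on large local densities in the strictly stable case `0 < β ≤ α < 1`:
for any `x ≥ 0`, `limsup (1/n) log Z_n([x√n, ∞)) ≤ log 2 - x²(1-α²)/2` almost surely
(with the convention `log 0 = -∞`, encoded in `EReal`). -/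
theorem stmt_16
    {Ω : Type*} [MeasureSpace Ω] [IsProbabilityMeasure (ℙ : Measure Ω)]
    (α β ρ : ℝ) (hρ : ρ ∈ Set.Ioo (-1 : ℝ) 1)
    (hβ : 0 < β) (hβα : β ≤ α) (hα : α < 1)
    (X η : ℕ → Ω → ℝ)
    (hXmeas : ∀ i, Measurable (X i)) (hηmeas : ∀ i, Measurable (η i))
    (hXrec : ∀ k, 1 ≤ k → ∀ ω,
      X (2 * k) ω = α * X k ω + η (2 * k) ω ∧
      X (2 * k + 1) ω = β * X k ω + η (2 * k + 1) ω)
    (hηiid : iIndepFun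
      (fun k ω => (η (2 * (k + 1)) ω, η (2 * (k + 1) + 1) ω)) ℙ)
    (hηlaw : ∀ k, Measure.map (fun ω => (η (2 * (k + 1)) ω, η (2 * (k + 1) + 1) ω)) ℙ
      = gaussian2 ρ)
    (hηX1 : IndepFun (X 1)
      (fun ω => fun k : ℕ => (η (2 * (k + 1)) ω, η (2 * (k + 1) + 1) ω)) ℙ)
    (x : ℝ) (hx : 0 ≤ x) :
    ∀ᵐ ω ∂ℙ, Filter.limsup
        (fun n : ℕ => if Zcount X n (x * Real.sqrt n) ω = 0 then (⊥ : EReal)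
          else ((Real.log (Zcount X n (x * Real.sqrt n) ω) / n : ℝ) : EReal))
        atTop
      ≤ ((Real.log 2 - x ^ 2 * (1 - α ^ 2) / 2 : ℝ) : EReal) :=
  stmt_16_general α β ρ hρ hβ hβα hα X η hηmeas hXrec hηiid hηlaw x hx
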